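/- arXiv:2403.07558 — 8 statements merged into one kernel-verified Lean document; each statement's English description precedes it below -/
import Mathlib

section
/- Let G = (V,E) be a finite cubic simple graph and let k be a natural number with 4 ≤ k ≤ |V|. Then G has a vertex cover of size at most k if and only if there exists a control solution (A,B,D) for the multi-delegation gadget whose cost |A| + 2|B| + 2·Σ_{e∈E} D(e) is at most k and such that s(e) < s* for every edge e ∈ E (i.e., the preferred candidate c* is the unique winner after the redirections). This is the correctness of the NP-hardness reduction of Theorem 1. -/
/-- Correctness of the NP-hardness reduction of Theorem 1 (multi-delegation gadget,
reduction from Vertex Cover in cubic graphs): `G` has a vertex cover of size at most `k`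
iff there is a control solution `(A, B, D)` of cost `|A| + 2|B| + 2·Σ D(e)` at most `k`
making the preferred candidate the unique winner, i.e. `s(e) < s*` for every edge `e`. -/
theorem vertex_cover_iff_control_solution_multi_delegation
    {V : Type*} [Fintype V] [DecidableEq V]
    (G : SimpleGraph V) [DecidableRel G.Adj]
    (hcubic : ∀ v : V, G.degree v = 3)
    (k : ℕ) (hk4 : 4 ≤ k) (hkV : k ≤ Fintype.card V) :
    (∃ S : Finset V, S.card ≤ k ∧ ∀ e ∈ G.edgeFinset, ∃ u ∈ S, u ∈ e) ↔
    (∃ (A : Finset V) (B : Finset (V × Sym2 V)) (D : Sym2 V → ℕ),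
      (∀ p ∈ B, p.2 ∈ G.edgeFinset ∧ p.1 ∈ p.2) ∧
      (∀ e ∈ G.edgeFinset, D e ≤ k - 4) ∧
      A.card + 2 * B.card + 2 * ∑ e ∈ G.edgeFinset, D e ≤ k ∧
      (∀ e ∈ G.edgeFinset,
        ((k + 1 : ℤ)
            - ∑ u ∈ Finset.univ.filter (fun u => u ∈ e),
                (if (u, e) ∈ B then (2 : ℤ) else if u ∈ A then 1 else 0)
            - (D e : ℤ))
          < 1 + ((A ∪ B.image Prod.fst).card : ℤ) + ((B.image Prod.fst).card : ℤ)
              + ∑ e' ∈ G.edgeFinset, (D e' : ℤ))) := by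
  constructor
  · rintro ⟨S, hScard, hScov⟩
    obtain ⟨A, hSA, hAu, hAcard⟩ :=
      Finset.exists_subsuperset_card_eq (Finset.subset_univ S) hScard
        (by simpa using hkV)
    refine ⟨A, ∅, fun _ => 0, by simp, by simp, by simpa using hAcard.le, ?_⟩
    intro e he
    obtain ⟨u, huS, hue⟩ := hScov e he
    have huA : u ∈ A := hSA huS
    have hsum : (1 : ℤ) ≤ ∑ u ∈ Finset.univ.filter (fun u => u ∈ e),
        (if (u, e) ∈ (∅ : Finset (V × Sym2 V)) then (2 : ℤ) else if u ∈ A then 1 else 0) := by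
      have hmem : u ∈ Finset.univ.filter (fun u => u ∈ e) := by simp [hue]
      have := Finset.single_le_sum
        (f := fun u => (if (u, e) ∈ (∅ : Finset (V × Sym2 V)) then (2 : ℤ)
          else if u ∈ A then 1 else 0))
        (fun i _ => by positivity) hmem
      simpa [huA] using this
    have : ((A ∪ (∅ : Finset (V × Sym2 V)).image Prod.fst).card : ℤ) = k := by
      simp [hAcard]
    rw [this]
    simp only [Finset.image_empty, Finset.card_empty, Nat.cast_zero, Nat.cast_ofNat]
    simp only [Finset.sum_const_zero]
    push_cast
    linarith
  · rintro ⟨A, B, D, hB, hD, hcost, hlt⟩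
    refine ⟨A ∪ B.image Prod.fst, ?_, ?_⟩
    · calc (A ∪ B.image Prod.fst).card ≤ A.card + (B.image Prod.fst).card :=
            Finset.card_union_le _ _
        _ ≤ A.card + B.card := by gcongr; exact Finset.card_image_le
        _ ≤ k := by omega
    · intro e he
      by_contra hcon
      push_neg at hcon
      have hsum0 : ∑ u ∈ Finset.univ.filter (fun u => u ∈ e),
          (if (u, e) ∈ B then (2 : ℤ) else if u ∈ A then 1 else 0) = 0 := by
        apply Finset.sum_eq_zero
        intro u hu
        simp only [Finset.mem_filter] at hu
        have h1 : (u, e) ∉ B := fun h => hcon u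
          (Finset.mem_union_right _ (Finset.mem_image.2 ⟨(u, e), h, rfl⟩)) hu.2
        have h2 : u ∉ A := fun h => hcon u (Finset.mem_union_left _ h) hu.2
        simp [h1, h2]
      have hlt' := hlt e he
      rw [hsum0] at hlt'
      have h1 : ((A ∪ B.image Prod.fst).card : ℤ) ≤ A.card + B.card := by
        have := Finset.card_union_le A (B.image Prod.fst)
        have h2 := Finset.card_image_le (s := B) (f := Prod.fst)
        push_cast
        exact_mod_cast le_trans (Nat.cast_le.2 this)
          (by exact_mod_cast Nat.add_le_add_left h2 A.card)
      have h2 : ((B.image Prod.fst).card : ℤ) ≤ B.card :=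
        Nat.cast_le.2 Finset.card_image_le
      have h3 : (D e : ℤ) ≤ ∑ e' ∈ G.edgeFinset, (D e' : ℤ) :=
        Finset.single_le_sum (f := fun e' => (D e' : ℤ)) (fun i _ => by positivity) he
      have hc : (A.card : ℤ) + 2 * B.card + 2 * ∑ e' ∈ G.edgeFinset, (D e' : ℤ) ≤ k := by
        exact_mod_cast (by push_cast; exact_mod_cast hcost :
          (A.card : ℤ) + 2 * B.card + 2 * ∑ e' ∈ G.edgeFinset, (D e' : ℤ) ≤ k)
      linarith
end

section
/- Let G = (V,E) be a finite cubic simple graph and k ≥ 4 a natural number. If (A,B,D) is a control solution for the multi-delegation gadget whose cost |A| + 2|B| + 2·Σ_{e∈E} D(e) is at most k and which satisfies s(e) < s* for every edge e ∈ E, then the score of every candidate c_e is reduced by at least one; that is, for every edge e ∈ E one has Σ_{u∈e} loss(u,e) + D(e) ≥ 1, equivalently s(e) ≤ k. (Claim 1 in the proof of Theorem 1.) -/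
/-- Claim 1 in the proof of Theorem 1: if a control solution `(A, B, D)` of the
multi-delegation gadget has cost at most `k` and makes `c*` the unique winner
(`s(e) < s*` for all edges `e`), then the score of every candidate `c_e` drops by at
least one, i.e. `Σ_{u∈e} loss(u,e) + D(e) ≥ 1` for every edge `e`. -/
theorem score_of_every_edge_candidate_drops_multi_delegation
    {V : Type*} [Fintype V] [DecidableEq V]
    (G : SimpleGraph V) [DecidableRel G.Adj]
    (hcubic : ∀ v : V, G.degree v = 3)
    (k : ℕ) (hk4 : 4 ≤ k)
    (A : Finset V) (B : Finset (V × Sym2 V)) (D : Sym2 V → ℕ)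
    (hB : ∀ p ∈ B, p.2 ∈ G.edgeFinset ∧ p.1 ∈ p.2)
    (hD : ∀ e ∈ G.edgeFinset, D e ≤ k - 4)
    (hcost : A.card + 2 * B.card + 2 * ∑ e ∈ G.edgeFinset, D e ≤ k)
    (hwin : ∀ e ∈ G.edgeFinset,
      ((k + 1 : ℤ)
          - ∑ u ∈ Finset.univ.filter (fun u => u ∈ e),
              (if (u, e) ∈ B then (2 : ℤ) else if u ∈ A then 1 else 0)
          - (D e : ℤ))
        < 1 + ((A ∪ B.image Prod.fst).card : ℤ) + ((B.image Prod.fst).card : ℤ)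
            + ∑ e' ∈ G.edgeFinset, (D e' : ℤ)) :
    ∀ e ∈ G.edgeFinset,
      (1 : ℤ) ≤ (∑ u ∈ Finset.univ.filter (fun u => u ∈ e),
          (if (u, e) ∈ B then (2 : ℤ) else if u ∈ A then 1 else 0)) + (D e : ℤ) := by
  intro e he
  have hSnn : (0 : ℤ) ≤ ∑ u ∈ Finset.univ.filter (fun u => u ∈ e),
      (if (u, e) ∈ B then (2 : ℤ) else if u ∈ A then 1 else 0) := by
    apply Finset.sum_nonneg
    intro u _
    split <;> [norm_num; skip]
    split <;> norm_num
  have hDnn : (0 : ℤ) ≤ (D e : ℤ) := Int.natCast_nonneg _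
  have h1 : ((A ∪ B.image Prod.fst).card : ℤ) ≤ (A.card : ℤ) + ((B.image Prod.fst).card : ℤ) := by
    exact_mod_cast Finset.card_union_le A (B.image Prod.fst)
  have h2 : ((B.image Prod.fst).card : ℤ) ≤ (B.card : ℤ) := by
    exact_mod_cast Finset.card_image_le
  have h3 : (∑ e' ∈ G.edgeFinset, (D e' : ℤ)) = ((∑ e' ∈ G.edgeFinset, D e' : ℕ) : ℤ) := by
    push_cast; ring
  have hcost' : (A.card : ℤ) + 2 * B.card + 2 * ((∑ e' ∈ G.edgeFinset, D e' : ℕ) : ℤ) ≤ k := by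
    exact_mod_cast hcost
  have hDsum : (0 : ℤ) ≤ ((∑ e' ∈ G.edgeFinset, D e' : ℕ) : ℤ) := Int.natCast_nonneg _
  have hw := hwin e he
  rw [h3] at hw
  linarith
end

section
/- Let G = (V,E) be a finite cubic simple graph and let k be a natural number with 4 ≤ k ≤ |V|. Then G has a vertex cover of size at most k if and only if there exists a control solution (A,D) for the single-delegation gadget whose cost |A| + Σ_{e∈E} D(e) is at most k and such that s(e) < s* for every edge e ∈ E (i.e., the preferred candidate c* is the unique winner after the redirections). This is the correctness of the NP-hardness reduction of Theorem 2. -/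
/-- Correctness of the NP-hardness reduction of Theorem 2 (single-delegation gadget,
reduction from Vertex Cover in cubic graphs): `G` has a vertex cover of size at most `k`
iff there is a control solution `(A, D)` of cost `|A| + Σ D(e)` at most `k` making the
preferred candidate the unique winner, i.e. `s(e) < s*` for every edge `e`. -/
theorem vertex_cover_iff_control_solution_single_delegation
    {V : Type*} [Fintype V] [DecidableEq V]
    (G : SimpleGraph V) [DecidableRel G.Adj]
    (hcubic : ∀ v : V, G.degree v = 3)
    (k : ℕ) (hk4 : 4 ≤ k) (hkV : k ≤ Fintype.card V) :
    (∃ S : Finset V, S.card ≤ k ∧ ∀ e ∈ G.edgeFinset, ∃ u ∈ S, u ∈ e) ↔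
    (∃ (A : Finset V) (D : Sym2 V → ℕ),
      (∀ e ∈ G.edgeFinset, D e ≤ k - 4) ∧
      A.card + ∑ e ∈ G.edgeFinset, D e ≤ k ∧
      (∀ e ∈ G.edgeFinset,
        ((k + 1 : ℤ)
            - ((Finset.univ.filter (fun u => u ∈ e ∧ u ∈ A)).card : ℤ)
            - (D e : ℤ))
          < 1 + (A.card : ℤ) + ∑ e' ∈ G.edgeFinset, (D e' : ℤ))) := by
  classical
  constructor
  · rintro ⟨S, hS, hcov⟩
    obtain ⟨A, hSA, hA⟩ := Finset.exists_superset_card_eq hS hkV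
    refine ⟨A, fun _ => 0, fun e _ => Nat.zero_le _, by simp [hA], ?_⟩
    intro e he
    obtain ⟨u, huS, hue⟩ := hcov e he
    have h1 : 1 ≤ (Finset.univ.filter (fun u => u ∈ e ∧ u ∈ A)).card := by
      refine Finset.card_pos.mpr ⟨u, ?_⟩
      simp [hue, hSA huS]
    have h1' : (1:ℤ) ≤ ((Finset.univ.filter (fun u => u ∈ e ∧ u ∈ A)).card : ℤ) := by
      exact_mod_cast h1
    have hk' : (A.card : ℤ) = (k : ℤ) := by exact_mod_cast hA
    simp only [Finset.sum_const_zero, Nat.cast_zero]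
    linarith
  · rintro ⟨A, D, hD, hcost, hwin⟩
    set B := G.edgeFinset.filter (fun e => ∀ u ∈ A, u ∉ e) with hB
    have hmem : ∀ e : Sym2 V, ∃ u, u ∈ e := fun e =>
      e.ind (fun a b => ⟨a, Sym2.mem_mk_left a b⟩)
    choose f hf using hmem
    have hsumcast : (∑ e' ∈ G.edgeFinset, (D e' : ℤ)) = ((∑ e' ∈ G.edgeFinset, D e') : ℤ) := by
      push_cast; ring
    have hB1 : ∀ e ∈ B, 1 ≤ D e := by
      intro e heB
      rw [hB, Finset.mem_filter] at heB
      obtain ⟨he, hne⟩ := heB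
      have hwine := hwin e he
      have hfilter : (Finset.univ.filter (fun u => u ∈ e ∧ u ∈ A)) = ∅ := by
        ext u
        simp only [Finset.mem_filter, Finset.mem_univ, true_and, Finset.notMem_empty,
          iff_false, not_and]
        intro h1 h2
        exact hne u h2 h1
      rw [hfilter, hsumcast] at hwine
      have hc : (A.card : ℤ) + ((∑ e' ∈ G.edgeFinset, D e') : ℤ) ≤ (k : ℤ) := by
        exact_mod_cast hcost
      by_contra h
      push_neg at h
      have hDe0 : D e = 0 := by omega
      rw [hDe0] at hwine
      simp only [Finset.card_empty, Nat.cast_zero] at hwine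
      linarith
    have hBcard : B.card ≤ ∑ e ∈ G.edgeFinset, D e := by
      calc B.card = ∑ e ∈ B, 1 := by simp
        _ ≤ ∑ e ∈ B, D e := Finset.sum_le_sum hB1
        _ ≤ ∑ e ∈ G.edgeFinset, D e :=
            Finset.sum_le_sum_of_subset (Finset.filter_subset _ _)
    refine ⟨A ∪ B.image f, ?_, ?_⟩
    · have hcard : (A ∪ B.image f).card ≤ A.card + B.card :=
        le_trans (Finset.card_union_le _ _)
          (by gcongr; exact Finset.card_image_le)
      omega
    · intro e he
      by_cases hc : ∃ u ∈ A, u ∈ e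
      · obtain ⟨u, hu, hue⟩ := hc
        exact ⟨u, Finset.mem_union_left _ hu, hue⟩
      · have heB : e ∈ B := by
          rw [hB, Finset.mem_filter]
          push_neg at hc
          exact ⟨he, hc⟩
        exact ⟨f e, Finset.mem_union_right _ (Finset.mem_image_of_mem f heB), hf e⟩
end

section
/- Let U be a finite set, let 𝓕 be a finite family of nonempty subsets of U, and let k be a natural number with k ≤ |U| and k ≥ 2|F| for every F ∈ 𝓕. Then 𝓕 has a hitting set of size at most k if and only if there exist A ⊆ U and D : 𝓕 → ℕ with D(F) ≤ k − 2|F| for every F, such that |A| + Σ_{F∈𝓕} D(F) ≤ k and, for every F ∈ 𝓕, (k+1) − |F ∩ A| − D(F) < 1 + |A| + Σ_{F'∈𝓕} D(F'). This is the correctness of the reduction from Hitting Set that yields the W[2]-hardness in Theorem 2. -/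
/-- Correctness of the reduction from Hitting Set (single delegation) yielding the
W[2]-hardness in Theorem 2: the family `𝓕` has a hitting set of size at most `k` iff
there exist `A ⊆ U` and dummy redirections `D` of total cost at most `k` making the
preferred candidate the unique winner. -/
theorem hitting_set_iff_control_solution
    {U : Type*} [Fintype U] [DecidableEq U]
    (𝓕 : Finset (Finset U)) (h𝓕 : ∀ F ∈ 𝓕, F.Nonempty)
    (k : ℕ) (hkU : k ≤ Fintype.card U) (hk : ∀ F ∈ 𝓕, 2 * F.card ≤ k) :
    (∃ S : Finset U, S.card ≤ k ∧ ∀ F ∈ 𝓕, (S ∩ F).Nonempty) ↔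
    (∃ (A : Finset U) (D : Finset U → ℕ),
      (∀ F ∈ 𝓕, D F ≤ k - 2 * F.card) ∧
      A.card + ∑ F ∈ 𝓕, D F ≤ k ∧
      (∀ F ∈ 𝓕,
        ((k + 1 : ℤ) - ((F ∩ A).card : ℤ) - (D F : ℤ))
          < 1 + (A.card : ℤ) + ∑ F' ∈ 𝓕, (D F' : ℤ))) := by
  constructor
  · rintro ⟨S, hSk, hS⟩
    obtain ⟨T, hST, hTcard⟩ := Finset.exists_subsuperset_card_eq
      (S.subset_univ) hSk (by simpa using hkU)
    refine ⟨T, fun _ => 0, fun F hF => Nat.zero_le _, by simp [hTcard], fun F hF => ?_⟩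
    have h1 : 1 ≤ (F ∩ T).card := by
      have : (F ∩ T).Nonempty := by
        obtain ⟨x, hx⟩ := hS F hF
        exact ⟨x, Finset.mem_inter.2 ⟨(Finset.mem_inter.1 hx).2,
          hST (Finset.mem_inter.1 hx).1⟩⟩
      exact Finset.card_pos.2 this
    have h1' : (1 : ℤ) ≤ ((F ∩ T).card : ℤ) := by exact_mod_cast h1
    simp only [hTcard]
    push_cast
    simp only [Finset.sum_const_zero]
    linarith
  · rintro ⟨A, D, hD, hcard, hwin⟩
    classical
    set T : Finset (Finset U) := 𝓕.filter (fun F => A ∩ F = ∅) with hT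
    have hTsub : T ⊆ 𝓕 := Finset.filter_subset _ _
    have hDT : ∀ F ∈ T, 1 ≤ D F := by
      intro F hFT
      have hF𝓕 : F ∈ 𝓕 := hTsub hFT
      have hempty : A ∩ F = ∅ := (Finset.mem_filter.1 hFT).2
      have h0 : (F ∩ A).card = 0 := by
        rw [Finset.inter_comm, hempty]; simp
      have := hwin F hF𝓕
      rw [h0] at this
      have hsum : (1 : ℤ) + (A.card : ℤ) + ∑ F' ∈ 𝓕, (D F' : ℤ) ≤ 1 + k := by
        have : (A.card : ℤ) + ∑ F' ∈ 𝓕, (D F' : ℤ) ≤ k := by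
          exact_mod_cast hcard
        linarith
      have : (0 : ℤ) < D F := by push_cast at this ⊢; linarith
      exact_mod_cast this
    set pick : ∀ F ∈ T, U := fun F hF => (h𝓕 F (hTsub hF)).choose with hpick
    refine ⟨A ∪ T.attach.image (fun F => (h𝓕 F.1 (hTsub F.2)).choose), ?_, ?_⟩
    · calc (A ∪ T.attach.image (fun F => (h𝓕 F.1 (hTsub F.2)).choose)).card
          ≤ A.card + (T.attach.image (fun F => (h𝓕 F.1 (hTsub F.2)).choose)).card :=
            Finset.card_union_le _ _
        _ ≤ A.card + T.card := by
            gcongr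
            exact (Finset.card_image_le).trans (by simp)
        _ ≤ A.card + ∑ F ∈ 𝓕, D F := by
            gcongr
            calc T.card = ∑ F ∈ T, 1 := by simp
              _ ≤ ∑ F ∈ T, D F := Finset.sum_le_sum hDT
              _ ≤ ∑ F ∈ 𝓕, D F := Finset.sum_le_sum_of_subset hTsub
        _ ≤ k := hcard
    · intro F hF
      by_cases hAF : (A ∩ F).Nonempty
      · obtain ⟨x, hx⟩ := hAF
        exact ⟨x, Finset.mem_inter.2 ⟨Finset.mem_union_left _ (Finset.mem_inter.1 hx).1,
          (Finset.mem_inter.1 hx).2⟩⟩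
      · have hFT : F ∈ T := Finset.mem_filter.2 ⟨hF, Finset.not_nonempty_iff_eq_empty.1 hAF⟩
        refine ⟨(h𝓕 F hF).choose, Finset.mem_inter.2 ⟨Finset.mem_union_right _ ?_, (h𝓕 F hF).choose_spec⟩⟩
        exact Finset.mem_image.2 ⟨⟨F, hFT⟩, Finset.mem_attach _ _, rfl⟩
end

section
/- Let T be a finite tree with root r and edge costs c : E(T) → ℕ. Let v ≠ r have parent w, let e₀ = {v,w}, let S_v be the subtree of v with ℓ = |S_v|, and let E_v be the set of edges of T with both endpoints in S_v. For A ⊆ E_v ∪ {e₀} define gain(A) = |{x ∈ S_v : the unique path from x to w contains an edge of A}|, and for A' ⊆ E_v define gain'(A') = |{x ∈ S_v, x ≠ v : the unique path from x to v contains an edge of A'}|. Then: (i) the minimum of Σ_{a∈A} c(a) over all A ⊆ E_v ∪ {e₀} with gain(A) ≥ ℓ equals c(e₀); and (ii) for every j with 0 ≤ j ≤ ℓ−1, the minimum of Σ_{a∈A} c(a) over all A ⊆ E_v ∪ {e₀} with gain(A) ≥ j equals the minimum of c(e₀) and the minimum of Σ_{a∈A'} c(a) over all A' ⊆ E_v with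 gain'(A') ≥ j. (Correctness of the step 'computing A_v given B_v' in the dynamic program of Lemma 1.) -/
/-!
A vertex `x` of the subtree `S_v` reaches the parent `w` only through `v`, because `w` is
joined to `r` by a walk avoiding `v`; in a tree the last step of such a path is the edge `e₀`.
Hence `{e₀}` separates all of `S_v` from `w`, while a set separating `v` from `w` must
contain `e₀`; this gives (i). For (ii), a set `A` either contains `e₀`, and then costs at
least `c(e₀)`, or avoids it; in the latter case, for `x ∈ S_v`, `A` separates `x` from `w`
exactly when `x ≠ v` and `A` separates `x` from `v`, so `gain A = gain' A`.
-/

open SimpleGraph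

namespace SimpleGraph

variable {V : Type*} {G : SimpleGraph V} {v w x r : V}

def Separates (G : SimpleGraph V) (A : Finset (Sym2 V)) (x y : V) : Prop :=
  ∀ p : G.Path x y, ∃ a ∈ A, a ∈ p.1.edges

lemma Separates.mem_of_adj {A : Finset (Sym2 V)} (hA : G.Separates A v w) (h : G.Adj v w) :
    s(v, w) ∈ A := by
  obtain ⟨a, ha, hae⟩ := hA (Path.singleton h)
  simp only [Path.singleton, Walk.edges_cons, Walk.edges_nil, List.mem_singleton] at hae
  exact hae ▸ ha

lemma Separates.of_forall_mem_support {A : Finset (Sym2 V)} (hA : G.Separates A x v)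
    (hv : ∀ p : G.Walk x w, v ∈ p.support) : G.Separates A x w := by
  classical
  intro p
  obtain ⟨a, ha, hae⟩ := hA ⟨p.1.takeUntil v (hv p.1), p.2.takeUntil _⟩
  exact ⟨a, ha, p.1.edges_takeUntil_subset_edges _ hae⟩

lemma Separates.of_adj_of_notMem {A : Finset (Sym2 V)} (hA : G.Separates A x w)
    (h : G.Adj v w) (he : s(v, w) ∉ A) : G.Separates A x v := by
  classical
  intro q
  obtain ⟨a, ha, hae⟩ := hA (q.1.concat h).toPath
  have hae' := Walk.edges_toPath_subset_edges _ hae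
  rw [Walk.edges_concat, List.concat_eq_append, List.mem_append, List.mem_singleton] at hae'
  rcases hae' with hq | rfl
  · exact ⟨a, ha, hq⟩
  · exact absurd ha he

lemma IsAcyclic.separates_singleton (hG : G.IsAcyclic) (h : G.Adj v w)
    (hv : ∀ p : G.Walk x w, v ∈ p.support) : G.Separates {s(v, w)} x w := by
  classical
  intro p
  have hlast : (⟨p.1.dropUntil v (hv p.1), p.2.dropUntil _⟩ : G.Path v w) = Path.singleton h :=
    (hG.subsingleton_path v w).elim _ _
  refine ⟨s(v, w), Finset.mem_singleton_self _, p.1.edges_dropUntil_subset_edges (hv p.1) ?_⟩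
  rw [show p.1.dropUntil v (hv p.1) = (Path.singleton h).1 from congrArg Subtype.val hlast]
  simp [Path.singleton]

lemma exists_walk_notMem_support (hr : G.Reachable v r) (hvw : v ≠ w)
    (hw : ∀ p : G.Path v r, w ∈ p.1.support) : ∃ q : G.Walk w r, v ∉ q.support := by
  classical
  obtain ⟨p⟩ := hr
  have hw' : w ∈ p.toPath.1.reverse.support := by simpa using hw p.toPath
  refine ⟨(p.toPath.1.reverse.takeUntil w hw').reverse, ?_⟩
  rw [Walk.support_reverse, List.mem_reverse]
  exact Walk.endpoint_notMem_support_takeUntil p.toPath.2.reverse hw' hvw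

lemma mem_support_of_forall_path_mem_support (hx : ∀ p : G.Path x r, v ∈ p.1.support)
    {q : G.Walk w r} (hq : v ∉ q.support) (p : G.Walk x w) : v ∈ p.support := by
  classical
  have h := Walk.support_toPath_subset_support _ (hx (p.append q).toPath)
  rw [Walk.mem_support_append_iff] at h
  exact h.resolve_right hq

end SimpleGraph

section MinCost

variable {α M : Type*} [AddCommMonoid M] [CompleteLinearOrder M] [IsOrderedAddMonoid M]
  [CanonicallyOrderedAdd M] (c : α → M)

lemma sInf_sum_eq_of_forall_mem {S : Finset α} {P : Finset α → Prop} {e : α} (heS : e ∈ S)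
    (he : P {e}) (hP : ∀ A ⊆ S, P A → e ∈ A) :
    sInf {x : M | ∃ A ⊆ S, P A ∧ x = ∑ a ∈ A, c a} = c e := by
  refine le_antisymm (sInf_le ⟨{e}, by simpa using heS, he, by simp⟩) (le_sInf ?_)
  rintro _ ⟨A, hAS, hA, rfl⟩
  exact Finset.single_le_sum (fun _ _ => zero_le) (hP A hAS hA)

lemma sInf_sum_insert_eq_min [DecidableEq α] {E : Finset α} {P Q : Finset α → Prop} {e : α}
    (he : P {e}) (hQP : ∀ A, Q A → P A) (hPQ : ∀ A, e ∉ A → P A → Q A) :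
    sInf {x : M | ∃ A ⊆ insert e E, P A ∧ x = ∑ a ∈ A, c a}
      = min (c e) (sInf {x : M | ∃ A ⊆ E, Q A ∧ x = ∑ a ∈ A, c a}) := by
  refine le_antisymm (le_min ?_ ?_) (le_sInf ?_)
  · exact sInf_le ⟨{e}, by simp, he, by simp⟩
  · refine sInf_le_sInf ?_
    rintro _ ⟨A, hAE, hA, rfl⟩
    exact ⟨A, hAE.trans (Finset.subset_insert _ _), hQP A hA, rfl⟩
  · rintro _ ⟨A, hAE, hA, rfl⟩
    by_cases heA : e ∈ A
    · exact min_le_of_left_le (Finset.single_le_sum (fun _ _ => zero_le) heA)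
    · refine min_le_of_right_le (sInf_le ⟨A, ?_, hPQ A heA hA, rfl⟩)
      exact (Finset.subset_insert_iff_of_notMem heA).1 hAE

end MinCost

open Classical in
theorem lemma_one_A_from_B_step_general
    {V : Type*} [Fintype V] (G : SimpleGraph V) (hT : G.IsTree)
    (r : V) (c : Sym2 V → ℕ)
    (v w : V) (hadj : G.Adj v w)
    (hparent : ∀ q : G.Path v r, w ∈ q.1.support) :
    ∀ (e₀ : Sym2 V), e₀ = s(v, w) →
    ∀ (Sv : Finset V),
      Sv = Finset.univ.filter (fun x => ∀ p : G.Path x r, v ∈ p.1.support) →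
    ∀ (ℓ : ℕ), ℓ = Sv.card →
    ∀ (Ev : Finset (Sym2 V)),
      Ev = G.edgeFinset.filter (fun e => ∀ u ∈ e, u ∈ Sv) →
    ∀ (gain gain' : Finset (Sym2 V) → ℕ),
      (∀ A, gain A =
        (Sv.filter (fun x => ∀ p : G.Path x w, ∃ a ∈ A, a ∈ p.1.edges)).card) →
      (∀ A', gain' A' =
        (Sv.filter (fun x => x ≠ v ∧ ∀ p : G.Path x v, ∃ a ∈ A', a ∈ p.1.edges)).card) →
    (sInf {x : ℕ∞ | ∃ A ⊆ insert e₀ Ev, ℓ ≤ gain A ∧ x = ∑ a ∈ A, (c a : ℕ∞)}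
        = (c e₀ : ℕ∞)) ∧
    (∀ j : ℕ, j ≤ ℓ - 1 →
      sInf {x : ℕ∞ | ∃ A ⊆ insert e₀ Ev, j ≤ gain A ∧ x = ∑ a ∈ A, (c a : ℕ∞)}
        = min (c e₀ : ℕ∞)
            (sInf {x : ℕ∞ | ∃ A' ⊆ Ev, j ≤ gain' A' ∧ x = ∑ a ∈ A', (c a : ℕ∞)})) := by
  classical
  intro e₀ rfl Sv hSv ℓ rfl Ev _ gain gain' hgain hgain'
  obtain ⟨q, hq⟩ := exists_walk_notMem_support (hT.connected.preconnected v r) hadj.ne hparent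
  have hSv_walk : ∀ x ∈ Sv, ∀ p : G.Walk x w, v ∈ p.support := fun x hx =>
    mem_support_of_forall_path_mem_support (by simpa [hSv] using hx) hq
  have hvSv : v ∈ Sv := by simp [hSv]
  have gain_singleton : gain {s(v, w)} = Sv.card := by
    rw [hgain]
    exact congrArg Finset.card <| Finset.filter_true_of_mem fun x hx =>
      hT.isAcyclic.separates_singleton hadj (hSv_walk x hx)
  have mem_of_card_le_gain (A) (hA : Sv.card ≤ gain A) : s(v, w) ∈ A := by
    rw [hgain] at hA
    have hall := Finset.eq_of_subset_of_card_le (Finset.filter_subset _ _) hA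
    exact Separates.mem_of_adj (Finset.mem_filter.1 (hall.symm.subset hvSv)).2 hadj
  refine ⟨sInf_sum_eq_of_forall_mem _ (Finset.mem_insert_self _ _) gain_singleton.ge
    fun A _ => mem_of_card_le_gain A, fun j hj => ?_⟩
  refine sInf_sum_insert_eq_min _ (gain_singleton ▸ hj.trans (Nat.sub_le _ _))
    (fun A hA => hA.trans ?_) fun A he hA => hA.trans ?_
  · rw [hgain, hgain']
    exact Finset.card_le_card <| Finset.monotone_filter_right _ fun x hx hsep =>
      Separates.of_forall_mem_support hsep.2 (hSv_walk x hx)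
  · rw [hgain, hgain']
    exact Finset.card_le_card <| Finset.monotone_filter_right _ fun x _ hsep =>
      ⟨fun hxv => he (Separates.mem_of_adj (hxv ▸ hsep) hadj),
        Separates.of_adj_of_notMem hsep hadj he⟩

open Classical in
/-- Correctness of the step "computing `A_v` given `B_v`" in the dynamic program of
Lemma 1.  In a finite rooted tree with edge costs, for a non-root vertex `v` with parent
`w` and connecting edge `e₀ = {v, w}`, with `S_v` the subtree of `v` (of size `ℓ`) and
`E_v` the edges inside `S_v`:
(i) the minimum cost of a set `A ⊆ E_v ∪ {e₀}` separating all `ℓ` vertices of `S_v`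
from `w` is `c(e₀)`; and
(ii) for each `0 ≤ j ≤ ℓ - 1`, the minimum cost of a set `A ⊆ E_v ∪ {e₀}` of gain at
least `j` is the minimum of `c(e₀)` and the minimum cost of a set `A' ⊆ E_v` of gain
(within the subtree, towards `v`) at least `j`. -/
theorem lemma_one_A_from_B_step
    {V : Type*} [Fintype V] (G : SimpleGraph V) (hT : G.IsTree)
    (r : V) (c : Sym2 V → ℕ)
    (v w : V) (hvr : v ≠ r) (hadj : G.Adj v w)
    (hparent : ∀ q : G.Path v r, w ∈ q.1.support) :
    ∀ (e₀ : Sym2 V), e₀ = s(v, w) →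
    ∀ (Sv : Finset V),
      Sv = Finset.univ.filter (fun x => ∀ p : G.Path x r, v ∈ p.1.support) →
    ∀ (ℓ : ℕ), ℓ = Sv.card →
    ∀ (Ev : Finset (Sym2 V)),
      Ev = G.edgeFinset.filter (fun e => ∀ u ∈ e, u ∈ Sv) →
    ∀ (gain gain' : Finset (Sym2 V) → ℕ),
      (∀ A, gain A =
        (Sv.filter (fun x => ∀ p : G.Path x w, ∃ a ∈ A, a ∈ p.1.edges)).card) →
      (∀ A', gain' A' =
        (Sv.filter (fun x => x ≠ v ∧ ∀ p : G.Path x v, ∃ a ∈ A', a ∈ p.1.edges)).card) →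
    (sInf {x : ℕ∞ | ∃ A ⊆ insert e₀ Ev, ℓ ≤ gain A ∧ x = ∑ a ∈ A, (c a : ℕ∞)}
        = (c e₀ : ℕ∞)) ∧
    (∀ j : ℕ, j ≤ ℓ - 1 →
      sInf {x : ℕ∞ | ∃ A ⊆ insert e₀ Ev, j ≤ gain A ∧ x = ∑ a ∈ A, (c a : ℕ∞)}
        = min (c e₀ : ℕ∞)
            (sInf {x : ℕ∞ | ∃ A' ⊆ Ev, j ≤ gain' A' ∧ x = ∑ a ∈ A', (c a : ℕ∞)})) :=
  lemma_one_A_from_B_step_general G hT r c v w hadj hparent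
end

section
/- Let d ∈ ℕ, let X and Y be disjoint finite sets with a cost function c : X ∪ Y → ℕ, let g_X assign to each subset of X a vector in ℕ^d, let g_Y assign to each subset of Y a vector in ℕ^d, and for A ⊆ X ∪ Y set g(A) = g_X(A ∩ X) + g_Y(A ∩ Y) (componentwise sum). For a vector n ∈ ℕ^d, let F(n) be the infimum in ℕ∞ of Σ_{a∈A} c(a) over all A ⊆ X ∪ Y with g(A) ≥ n componentwise, and define F_X and F_Y analogously on subsets of X and of Y. Then for every n ∈ ℕ^d, F(n) equals the minimum of F_X(a) + F_Y(b) over all pairs of vectors a, b ∈ ℕ^d with a + b = n. (Correctness of the merge over valid partitions of a multiset in the dynamic program of Theorem 5.) -/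
/-- Correctness of the merge over valid partitions of a multiset in the dynamic program
of Theorem 5 (vector-valued gains): for disjoint ground sets `X`, `Y` with costs `c` and
gain functions `g_X`, `g_Y` into `ℕ^d`, the minimum cost of `A ⊆ X ∪ Y` with
`g_X(A ∩ X) + g_Y(A ∩ Y) ≥ n` componentwise equals the minimum of `F_X(a) + F_Y(b)` over
all pairs of vectors with `a + b = n`. -/
theorem vector_merge_recurrence_correct
    {α : Type*} [DecidableEq α] (d : ℕ) (X Y : Finset α) (hXY : Disjoint X Y)
    (c : α → ℕ) (gX gY : Finset α → (Fin d → ℕ)) (n : Fin d → ℕ) :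
    sInf {v : ℕ∞ | ∃ A ⊆ X ∪ Y,
        (∀ i : Fin d, n i ≤ gX (A ∩ X) i + gY (A ∩ Y) i) ∧ v = ∑ a ∈ A, (c a : ℕ∞)} =
      sInf {v : ℕ∞ | ∃ a b : Fin d → ℕ, a + b = n ∧
        v = sInf {v₁ : ℕ∞ | ∃ A₁ ⊆ X, (∀ i : Fin d, a i ≤ gX A₁ i) ∧
              v₁ = ∑ x ∈ A₁, (c x : ℕ∞)}
          + sInf {v₂ : ℕ∞ | ∃ A₂ ⊆ Y, (∀ i : Fin d, b i ≤ gY A₂ i) ∧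
              v₂ = ∑ x ∈ A₂, (c x : ℕ∞)}} := by
  apply le_antisymm
  · -- LHS ≤ RHS
    apply le_sInf
    rintro v ⟨a, b, hab, rfl⟩
    set S₁ : Set ℕ∞ := {v₁ : ℕ∞ | ∃ A₁ ⊆ X, (∀ i : Fin d, a i ≤ gX A₁ i) ∧
        v₁ = ∑ x ∈ A₁, (c x : ℕ∞)} with hS₁
    set S₂ : Set ℕ∞ := {v₂ : ℕ∞ | ∃ A₂ ⊆ Y, (∀ i : Fin d, b i ≤ gY A₂ i) ∧
        v₂ = ∑ x ∈ A₂, (c x : ℕ∞)} with hS₂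
    rcases eq_or_ne (sInf S₁) ⊤ with h1 | h1
    · simp [h1]
    rcases eq_or_ne (sInf S₂) ⊤ with h2 | h2
    · simp [h2]
    have hne1 : S₁.Nonempty := by
      by_contra h
      exact h1 (by simp [Set.not_nonempty_iff_eq_empty.mp h])
    have hne2 : S₂.Nonempty := by
      by_contra h
      exact h2 (by simp [Set.not_nonempty_iff_eq_empty.mp h])
    obtain ⟨A₁, hA₁X, hga, hv1⟩ := csInf_mem hne1
    obtain ⟨A₂, hA₂Y, hgb, hv2⟩ := csInf_mem hne2
    have hd12 : Disjoint A₁ A₂ := hXY.mono hA₁X hA₂Y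
    have hAX : (A₁ ∪ A₂) ∩ X = A₁ := by
      rw [Finset.union_inter_distrib_right, Finset.inter_eq_left.mpr hA₁X,
        Finset.disjoint_iff_inter_eq_empty.mp (hXY.symm.mono_left hA₂Y),
        Finset.union_empty]
    have hAY : (A₁ ∪ A₂) ∩ Y = A₂ := by
      rw [Finset.union_inter_distrib_right, Finset.inter_eq_left.mpr hA₂Y,
        Finset.disjoint_iff_inter_eq_empty.mp (hXY.mono_left hA₁X),
        Finset.empty_union]
    apply sInf_le
    refine ⟨A₁ ∪ A₂, Finset.union_subset_union hA₁X hA₂Y, ?_, ?_⟩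
    · intro i
      rw [hAX, hAY]
      have h3 := congrFun hab i
      simp only [Pi.add_apply] at h3
      have h4 := hga i
      have h5 := hgb i
      omega
    · rw [hv1, hv2, Finset.sum_union hd12]
  · -- RHS ≤ LHS
    apply le_sInf
    rintro v ⟨A, hA, hg, rfl⟩
    set a : Fin d → ℕ := fun i => min (n i) (gX (A ∩ X) i) with ha
    set b : Fin d → ℕ := fun i => n i - a i with hb
    have hAsplit : A = (A ∩ X) ∪ (A ∩ Y) := by
      rw [← Finset.inter_union_distrib_left, Finset.inter_eq_left.mpr hA]
    have hdisj : Disjoint (A ∩ X) (A ∩ Y) :=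
      hXY.mono Finset.inter_subset_right Finset.inter_subset_right
    calc sInf _ ≤ sInf {v₁ : ℕ∞ | ∃ A₁ ⊆ X, (∀ i : Fin d, a i ≤ gX A₁ i) ∧
              v₁ = ∑ x ∈ A₁, (c x : ℕ∞)}
          + sInf {v₂ : ℕ∞ | ∃ A₂ ⊆ Y, (∀ i : Fin d, b i ≤ gY A₂ i) ∧
              v₂ = ∑ x ∈ A₂, (c x : ℕ∞)} := by
            apply sInf_le
            refine ⟨a, b, ?_, rfl⟩
            funext i
            have := hg i
            simp only [Pi.add_apply, ha, hb]
            omega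
      _ ≤ (∑ x ∈ A ∩ X, (c x : ℕ∞)) + ∑ x ∈ A ∩ Y, (c x : ℕ∞) := by
            gcongr
            · exact sInf_le ⟨A ∩ X, Finset.inter_subset_right, fun i => min_le_right _ _, rfl⟩
            · refine sInf_le ⟨A ∩ Y, Finset.inter_subset_right, fun i => ?_, rfl⟩
              have := hg i
              simp only [ha, hb]
              omega
      _ = ∑ x ∈ A, (c x : ℕ∞) := by
            conv_rhs => rw [hAsplit]
            rw [Finset.sum_union hdisj]
end

section
/- Let t ∈ ℕ, and for each i with 1 ≤ i ≤ t let A_i : ℕ → ℕ∞ and l_i ∈ ℕ. For 0 ≤ i ≤ t and k, x ∈ ℕ define M(i,k,x) as the infimum in ℕ∞ of Σ_{q=1}^{i} A_q(j_q) over all tuples (j_1, …, j_i) of natural numbers satisfying l_q ∸ x ≤ j_q ≤ l_q for every q and Σ_{q=1}^{i} j_q ≥ k (so M(0,k,x) = 0 if k = 0 and M(0,k,x) = ⊤ otherwise). Then for every i with 1 ≤ i ≤ t and all k, x ∈ ℕ: M(i,k,x) = inf { A_i(j) + M(i−1, k ∸ j, x) : j ∈ ℕ, l_i ∸ x ≤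 j ≤ l_i }. (Correctness of the second-level dynamic-programming recurrence, equation (3), in the proof of Theorem 3.) -/
/-! Splitting off the last tree: a feasible tuple for the first `n + 1` trees is a feasible tuple
for the first `n` trees, with demand lowered by `j (n + 1)`, extended by the value `j (n + 1)`.
Since addition in `ℕ∞` commutes with infima (`ENat.add_sInf`), minimizing first over that last
value and then over the rest gives the same infimum. -/

open Finset

def tupleCosts (A : ℕ → ℕ → ℕ∞) (l : ℕ → ℕ) (i k x : ℕ) : Set ℕ∞ :=
  {v | ∃ j : ℕ → ℕ, (∀ q ∈ Icc 1 i, l q - x ≤ j q ∧ j q ≤ l q) ∧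
    k ≤ ∑ q ∈ Icc 1 i, j q ∧ v = ∑ q ∈ Icc 1 i, A q (j q)}

theorem sum_Icc_one_succ_update {α β : Type*} [AddCommMonoid β] (f : ℕ → α → β)
    (j : ℕ → α) (n : ℕ) (b : α) :
    ∑ q ∈ Icc 1 (n + 1), f q (Function.update j (n + 1) b q) =
      ∑ q ∈ Icc 1 n, f q (j q) + f (n + 1) b := by
  rw [sum_Icc_succ_top (Nat.le_add_left 1 n), Function.update_self]
  congr 1
  refine sum_congr rfl fun q hq => ?_
  rw [Function.update_of_ne (by grind)]

theorem add_mem_tupleCosts_succ {A : ℕ → ℕ → ℕ∞} {l : ℕ → ℕ} {n k x b : ℕ} {v : ℕ∞}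
    (hv : v ∈ tupleCosts A l n (k - b) x) (hb : l (n + 1) - x ≤ b ∧ b ≤ l (n + 1)) :
    A (n + 1) b + v ∈ tupleCosts A l (n + 1) k x := by
  obtain ⟨j, hbounds, hk, rfl⟩ := hv
  refine ⟨Function.update j (n + 1) b, fun q hq => ?_, ?_, ?_⟩
  · rcases eq_or_ne q (n + 1) with rfl | hqn
    · simpa using hb
    · rw [Function.update_of_ne hqn]
      exact hbounds q (by grind)
  · rw [sum_Icc_one_succ_update (fun _ b => b)]
    omega
  · rw [sum_Icc_one_succ_update A, add_comm]

theorem sum_init_mem_tupleCosts {A : ℕ → ℕ → ℕ∞} {l : ℕ → ℕ} {n k x : ℕ} {j : ℕ → ℕ}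
    (hbounds : ∀ q ∈ Icc 1 (n + 1), l q - x ≤ j q ∧ j q ≤ l q)
    (hk : k ≤ ∑ q ∈ Icc 1 (n + 1), j q) :
    ∑ q ∈ Icc 1 n, A q (j q) ∈ tupleCosts A l n (k - j (n + 1)) x := by
  rw [sum_Icc_succ_top (Nat.le_add_left 1 n)] at hk
  exact ⟨j, fun q hq => hbounds q (by grind), by omega, rfl⟩

theorem sInf_tupleCosts_succ (A : ℕ → ℕ → ℕ∞) (l : ℕ → ℕ) (n k x : ℕ) :
    sInf (tupleCosts A l (n + 1) k x) =
      sInf {v | ∃ b, l (n + 1) - x ≤ b ∧ b ≤ l (n + 1) ∧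
        v = A (n + 1) b + sInf (tupleCosts A l n (k - b) x)} := by
  apply le_antisymm
  · refine le_sInf ?_
    rintro _ ⟨b, hlo, hhi, rfl⟩
    rw [ENat.add_sInf]
    exact le_iInf₂ fun v hv => sInf_le (add_mem_tupleCosts_succ hv ⟨hlo, hhi⟩)
  · refine le_sInf ?_
    rintro _ ⟨j, hbounds, hk, rfl⟩
    have hlast := hbounds (n + 1) (by simp)
    refine (sInf_le (by exact ⟨j (n + 1), hlast.1, hlast.2, rfl⟩)).trans ?_
    calc A (n + 1) (j (n + 1)) + sInf (tupleCosts A l n (k - j (n + 1)) x)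
      _ ≤ A (n + 1) (j (n + 1)) + ∑ q ∈ Icc 1 n, A q (j q) :=
          add_le_add_right (sInf_le (sum_init_mem_tupleCosts hbounds hk)) _
      _ = ∑ q ∈ Icc 1 (n + 1), A q (j q) := by
          rw [sum_Icc_succ_top (Nat.le_add_left 1 n), add_comm]

/-- Correctness of the second-level dynamic-programming recurrence (equation (3)) in the
proof of Theorem 3: with `M i k x` the minimum of `Σ_{q=1}^{i} A_q(j_q)` over tuples
`(j_1, …, j_i)` with `l_q ∸ x ≤ j_q ≤ l_q` for each `q` and `Σ j_q ≥ k`, one has, for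
every `1 ≤ i ≤ t` and all `k`, `x`,
`M i k x = inf { A_i(j) + M (i-1) (k ∸ j) x : l_i ∸ x ≤ j ≤ l_i }`. -/
theorem dp_recurrence_correct
    (t : ℕ) (A : ℕ → ℕ → ℕ∞) (l : ℕ → ℕ)
    (M : ℕ → ℕ → ℕ → ℕ∞)
    (hM : ∀ i k x : ℕ, M i k x =
      sInf {v : ℕ∞ | ∃ j : ℕ → ℕ,
        (∀ q ∈ Finset.Icc 1 i, l q - x ≤ j q ∧ j q ≤ l q) ∧
        k ≤ ∑ q ∈ Finset.Icc 1 i, j q ∧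
        v = ∑ q ∈ Finset.Icc 1 i, A q (j q)}) :
    ∀ i : ℕ, 1 ≤ i → i ≤ t → ∀ k x : ℕ,
      M i k x =
        sInf {v : ℕ∞ | ∃ j : ℕ,
          l i - x ≤ j ∧ j ≤ l i ∧ v = A i j + M (i - 1) (k - j) x} := by
  intro i hi _ k x
  obtain ⟨n, rfl⟩ : ∃ n, i = n + 1 := ⟨i - 1, by omega⟩
  have hM' : ∀ i k, M i k x = sInf (tupleCosts A l i k x) := fun i k => hM i k x
  simp only [hM', Nat.add_sub_cancel]
  exact sInf_tupleCosts_succ A l n k x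
end

section
/- Let ε and w be real numbers with 0 < ε ≤ 1 and w > 0, let n ≥ 1 and t be natural numbers with t ≤ n, and let w_1, …, w_t be nonnegative reals with Σ_{i=1}^{t} w_i ≥ w. For each i set w'_i = max(w_i, εw/(2n)) and let p_i = ⌈ ln(w'_i) / ln(1 + ε/3) ⌉ (an integer, possibly negative). Then Σ_{i=1}^{t} (1 + ε/3)^{p_i} ≤ (1 + ε) · Σ_{i=1}^{t} w_i. (The total guarantee of the geometric rounding in the FPT approximation scheme of Theorem 6: rounding each lifted budget up to the next power of 1 + ε/3 loses at most a factor 1 + ε overall.) -/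
lemma pow_ceil_le (b x : ℝ) (hb : 1 < b) (hx : 0 < x) :
    b ^ (⌈Real.log x / Real.log b⌉ : ℤ) ≤ b * x := by
  have hb0 : 0 < b := by linarith
  have hlb : 0 < Real.log b := Real.log_pos hb
  have key : (b : ℝ) ^ ((⌈Real.log x / Real.log b⌉ : ℤ) : ℝ) ≤
      b ^ (Real.log x / Real.log b + 1) := by
    apply Real.rpow_le_rpow_of_exponent_le (le_of_lt hb)
    calc ((⌈Real.log x / Real.log b⌉ : ℤ) : ℝ)
        ≤ ((⌊Real.log x / Real.log b⌋ + 1 : ℤ) : ℝ) := by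
          exact_mod_cast Int.ceil_le_floor_add_one _
      _ ≤ Real.log x / Real.log b + 1 := by
          push_cast; linarith [Int.floor_le (Real.log x / Real.log b)]
  rw [Real.rpow_intCast] at key
  refine key.trans ?_
  rw [Real.rpow_add hb0, Real.rpow_one]
  have hx' : b ^ (Real.log x / Real.log b) = x := by
    rw [Real.rpow_def_of_pos hb0, mul_comm, div_mul_cancel₀ _ (ne_of_gt hlb),
      Real.exp_log hx]
  rw [hx', mul_comm]

/-- The total guarantee of the geometric rounding in the FPT approximation scheme of
Theorem 6: rounding each lifted budget `w'_i = max(w_i, εw/(2n))` up to the next integer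
power of `1 + ε/3` loses at most a factor `1 + ε` overall. -/
theorem geometric_rounding_bound
    (ε w : ℝ) (hε : 0 < ε) (hε1 : ε ≤ 1) (hw : 0 < w)
    (n t : ℕ) (hn : 1 ≤ n) (ht : t ≤ n)
    (wi : ℕ → ℝ) (hwi : ∀ i ∈ Finset.Icc 1 t, 0 ≤ wi i)
    (hsum : w ≤ ∑ i ∈ Finset.Icc 1 t, wi i) :
    ∑ i ∈ Finset.Icc 1 t,
        (1 + ε / 3) ^
          (⌈Real.log (max (wi i) (ε * w / (2 * n))) / Real.log (1 + ε / 3)⌉ : ℤ) ≤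
      (1 + ε) * ∑ i ∈ Finset.Icc 1 t, wi i := by
  set b : ℝ := 1 + ε / 3 with hbdef
  have hb : 1 < b := by rw [hbdef]; linarith
  have hn0 : (0 : ℝ) < n := by exact_mod_cast hn
  have hc : 0 < ε * w / (2 * n) := by positivity
  set c : ℝ := ε * w / (2 * n) with hcdef
  set S : ℝ := ∑ i ∈ Finset.Icc 1 t, wi i with hSdef
  have hS : 0 < S := lt_of_lt_of_le hw hsum
  have step1 : ∑ i ∈ Finset.Icc 1 t,
      b ^ (⌈Real.log (max (wi i) c) / Real.log b⌉ : ℤ) ≤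
      ∑ i ∈ Finset.Icc 1 t, b * (wi i + c) := by
    apply Finset.sum_le_sum
    intro i hi
    have hx : 0 < max (wi i) c := lt_max_of_lt_right hc
    refine (pow_ceil_le b _ hb hx).trans ?_
    have hm : max (wi i) c ≤ wi i + c := max_le (by linarith) (by linarith [hwi i hi])
    nlinarith
  have step2 : ∑ i ∈ Finset.Icc 1 t, b * (wi i + c) = b * (S + t * c) := by
    rw [← Finset.mul_sum, Finset.sum_add_distrib, Finset.sum_const, Nat.card_Icc,
      Nat.add_sub_cancel, nsmul_eq_mul, hSdef]
  rw [step2] at step1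
  refine step1.trans ?_
  have htc : (t : ℝ) * c ≤ ε * S / 2 := by
    have htn : (t : ℝ) ≤ n := by exact_mod_cast ht
    have h1 : (t : ℝ) * c ≤ n * c := by nlinarith
    have h2 : (n : ℝ) * c = ε * w / 2 := by
      rw [hcdef]; field_simp
    nlinarith
  rw [hbdef]
  nlinarith [mul_le_mul_of_nonneg_left htc (by linarith : (0:ℝ) ≤ 1 + ε / 3),
    mul_nonneg (mul_nonneg (by linarith : (0:ℝ) ≤ 1 - ε) hε.le) hS.le]
end
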